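/- Let T be a tree of order n with C_{2f}(T) = n. Then T is the path P_2. -/

import Mathlib

/-- `S` is a `k`-fair dominating set of `G`: every vertex outside `S` has exactly `k`
neighbors in `S`. -/
def SimpleGraph.KFairDom {V : Type*} (G : SimpleGraph V) (k : ℕ) (S : Set V) : Prop :=
  ∀ v ∉ S, (G.neighborSet v ∩ S).ncard = k

/-- Disjoint sets `A`, `B` form a `k`-fair coalition: neither is a `k`-fair dominating
set, but their union is. -/
def SimpleGraph.KFairCoalition {V : Type*} (G : SimpleGraph V) (k : ℕ) (A B : Set V) : Prop :=
  Disjoint A B ∧ ¬ G.KFairDom k A ∧ ¬ G.KFairDom k B ∧ G.KFairDom k (A ∪ B)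

/-- `P` is a `k`-fair coalition partition of `G`: a partition of the vertex set into
nonempty blocks, each of which is either a `k`-fair dominating set with exactly `k`
vertices or forms a `k`-fair coalition with another block. -/
def SimpleGraph.IsKFairCoalPartition {V : Type*} (G : SimpleGraph V) (k : ℕ)
    (P : Set (Set V)) : Prop :=
  (∀ A ∈ P, A.Nonempty) ∧ ⋃₀ P = Set.univ ∧ P.PairwiseDisjoint id ∧
  ∀ A ∈ P, (G.KFairDom k A ∧ A.ncard = k) ∨
    (¬ G.KFairDom k A ∧ ∃ B ∈ P, B ≠ A ∧ G.KFairCoalition k A B)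

/-- The `k`-fair coalition number `C_{kf}(G)`: the maximum size of a `k`-fair coalition
partition of `G`. -/
noncomputable def SimpleGraph.kFairCoalNum {V : Type*} (G : SimpleGraph V) (k : ℕ) : ℕ :=
  sSup {n | ∃ P : Set (Set V), G.IsKFairCoalPartition k P ∧ P.ncard = n}

/-- The `k`-fair domatic number `d_{kf}(G)`: the maximum size of a partition of the
vertex set into `k`-fair dominating sets. -/
noncomputable def SimpleGraph.kFairDomaticNum {V : Type*} (G : SimpleGraph V) (k : ℕ) : ℕ :=
  sSup {n | ∃ P : Set (Set V), (∀ A ∈ P, A.Nonempty) ∧ ⋃₀ P = Set.univ ∧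
    P.PairwiseDisjoint id ∧ (∀ A ∈ P, G.KFairDom k A) ∧ P.ncard = n}

/-!
A coalition partition with `n` blocks on `n` vertices consists of singletons. A singleton `{v}`
is too small to be a 2-fair dominating set on its own, so it has a coalition partner `{u}`, and
then every other vertex is adjacent to both `v` and `u`. In a tree two vertices have at most one
common neighbour and there are no triangles; applied to the partner pairs of `v` and of a
putative third vertex, this leaves no room for a third vertex, and a connected graph on two
vertices is `P₂`.
-/

open Set

namespace Set.PairwiseDisjoint

variable {V : Type*} {P : Set (Set V)}

lemma injective_nonempty_some (hP : P.PairwiseDisjoint id) (hne : ∀ A ∈ P, A.Nonempty) :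
    Function.Injective fun A : P => (hne A A.2).some := by
  intro A B (hAB : (hne A A.2).some = (hne B B.2).some)
  by_contra h
  refine disjoint_left.mp (hP A.2 B.2 (Subtype.coe_ne_coe.mpr h)) (hne A A.2).some_mem ?_
  exact hAB ▸ (hne B B.2).some_mem

lemma ncard_le_card [Finite V] (hP : P.PairwiseDisjoint id) (hne : ∀ A ∈ P, A.Nonempty) :
    P.ncard ≤ Nat.card V := by
  rw [← Nat.card_coe_set_eq]
  exact Nat.card_le_card_of_injective _ (hP.injective_nonempty_some hne)

lemma singleton_mem_of_ncard_eq [Finite V] (hP : P.PairwiseDisjoint id)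
    (hne : ∀ A ∈ P, A.Nonempty) (hcard : P.ncard = Nat.card V) (v : V) : {v} ∈ P := by
  set f := fun A : P => (hne A A.2).some
  have hf : f.Bijective := (Nat.bijective_iff_injective_and_card f).mpr
    ⟨hP.injective_nonempty_some hne, by rw [Nat.card_coe_set_eq, hcard]⟩
  obtain ⟨A, rfl⟩ := hf.2 v
  suffices (A : Set V) = {f A} from this ▸ A.2
  refine eq_singleton_iff_unique_mem.mpr ⟨(hne A A.2).some_mem, fun b hb => ?_⟩
  obtain ⟨B, rfl⟩ := hf.2 b
  obtain rfl : B = A := by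
    by_contra h
    exact disjoint_left.mp (hP B.2 A.2 (Subtype.coe_ne_coe.mpr h)) (hne B B.2).some_mem hb
  rfl

end Set.PairwiseDisjoint

namespace SimpleGraph

variable {V : Type*} {G : SimpleGraph V} {k : ℕ}

lemma exists_isKFairCoalPartition_ncard_eq_kFairCoalNum [Finite V] (h : G.kFairCoalNum k ≠ 0) :
    ∃ P, G.IsKFairCoalPartition k P ∧ P.ncard = G.kFairCoalNum k := by
  have hbdd : BddAbove {n | ∃ P : Set (Set V), G.IsKFairCoalPartition k P ∧ P.ncard = n} :=
    ⟨Nat.card V, by rintro _ ⟨P, hP, rfl⟩; exact hP.2.2.1.ncard_le_card hP.1⟩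
  refine Nat.sSup_mem (nonempty_iff_ne_empty.mpr fun hemp => h ?_) hbdd
  simp [kFairCoalNum, hemp]

lemma IsKFairCoalPartition.exists_kFairDom_pair {P : Set (Set V)}
    (hP : G.IsKFairCoalPartition k P) (hk : k ≠ 1) (hsing : ∀ v, {v} ∈ P) (v : V) :
    ∃ u ≠ v, G.KFairDom k {v, u} := by
  obtain ⟨hne, -, hdis, hblock⟩ := hP
  rcases hblock {v} (hsing v) with ⟨-, hcard⟩ | ⟨-, B, hB, hBv, -, -, -, hdom⟩
  · exact absurd ((ncard_singleton v).symm.trans hcard).symm hk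
  · obtain ⟨u, hu⟩ := hne B hB
    obtain rfl : B = {u} := by
      by_contra h
      exact Set.disjoint_left.mp (hdis hB (hsing u) h) hu (mem_singleton u)
    exact ⟨u, fun h => hBv (h ▸ rfl), by rwa [singleton_union] at hdom⟩

lemma KFairDom.adj_of_notMem_of_mem {S : Set V} (h : G.KFairDom S.ncard S) (hS : S.Finite)
    {w x : V} (hw : w ∉ S) (hx : x ∈ S) : G.Adj w x := by
  have hS' : G.neighborSet w ∩ S = S :=
    eq_of_subset_of_ncard_le inter_subset_right (h w hw).ge hS
  exact (hS'.symm ▸ hx : x ∈ G.neighborSet w ∩ S).1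

lemma IsAcyclic.eq_of_adj_of_adj (hG : G.IsAcyclic) {v u w w' : V} (hvu : v ≠ u)
    (hvw : G.Adj v w) (hwu : G.Adj w u) (hvw' : G.Adj v w') (hw'u : G.Adj w' u) : w = w' := by
  have hp : (Walk.cons hvw (Walk.cons hwu Walk.nil)).IsPath := by
    simp [hvw.ne, hwu.ne, hvu]
  have hp' : (Walk.cons hvw' (Walk.cons hw'u Walk.nil)).IsPath := by
    simp [hvw'.ne, hw'u.ne, hvu]
  have hpp' : (⟨_, hp⟩ : G.Path v u) = ⟨_, hp'⟩ := (hG.subsingleton_path v u).elim _ _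
  simpa using congrArg (fun p : G.Path v u => p.1.snd) hpp'

lemma IsAcyclic.not_adj_of_adj_of_adj (hG : G.IsAcyclic) {a b c : V} (hab : G.Adj a b)
    (hac : G.Adj a c) : ¬ G.Adj b c := by
  classical
  exact fun hbc => hG.cliqueFree le_rfl {a, b, c} (is3Clique_triple_iff.mpr ⟨hab, hac, hbc⟩)

lemma KFairDom.adj_and_adj_of_pair {a b w : V} (h : G.KFairDom 2 {a, b}) (hab : a ≠ b)
    (hwa : w ≠ a) (hwb : w ≠ b) : G.Adj w a ∧ G.Adj w b := by
  rw [← ncard_pair hab] at h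
  have hw : w ∉ ({a, b} : Set V) := by simp [hwa, hwb]
  exact ⟨h.adj_of_notMem_of_mem (toFinite _) hw (by simp),
    h.adj_of_notMem_of_mem (toFinite _) hw (by simp)⟩

lemma IsAcyclic.eq_or_eq_of_forall_exists_kFairDom_two (hG : G.IsAcyclic)
    (hpair : ∀ v, ∃ u ≠ v, G.KFairDom 2 {v, u}) {v u : V} (huv : u ≠ v)
    (hdom : G.KFairDom 2 {v, u}) (w : V) : w = v ∨ w = u := by
  by_contra! ⟨hwv, hwu⟩
  obtain ⟨hwv', hwu'⟩ := hdom.adj_and_adj_of_pair huv.symm hwv hwu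
  obtain ⟨x, hxw, hx⟩ := hpair w
  by_cases hxv : x = v
  · subst hxv
    exact hG.not_adj_of_adj_of_adj hwv' hwu' (hx.adj_and_adj_of_pair hxw.symm hwu.symm huv).2.symm
  by_cases hxu : x = u
  · subst hxu
    exact hG.not_adj_of_adj_of_adj hwv' hwu' (hx.adj_and_adj_of_pair hxw.symm hwv.symm huv.symm).2
  obtain ⟨hxv', hxu'⟩ := hdom.adj_and_adj_of_pair huv.symm hxv hxu
  exact hxw (hG.eq_of_adj_of_adj huv.symm hxv'.symm hxu' hwv'.symm hwu')

lemma Connected.nonempty_iso_pathGraph_two (hG : G.Connected) (hV : Nat.card V = 2) :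
    Nonempty (G ≃g pathGraph 2) := by
  have : Finite V := Nat.finite_of_card_ne_zero (by omega)
  have htop : G = ⊤ := by
    ext a b
    refine ⟨G.ne_of_adj, fun hab => ?_⟩
    obtain ⟨p⟩ := hG a b
    have hp : ¬ p.Nil := Walk.not_nil_of_ne hab
    obtain ⟨c, -, hc⟩ := (Nat.card_eq_two_iff' a).mp hV
    rw [hc b (Ne.symm hab), ← hc p.snd (p.adj_snd hp).ne.symm]
    exact p.adj_snd hp
  rw [htop, pathGraph_two_eq_top]
  exact ⟨Iso.completeGraph ((Finite.equivFin V).trans (finCongr hV))⟩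

end SimpleGraph

theorem tree_twoFairCoalNum_eq_card {V : Type*} [Fintype V] (T : SimpleGraph V)
    (hT : T.IsTree) (h : T.kFairCoalNum 2 = Fintype.card V) :
    Nonempty (T ≃g SimpleGraph.pathGraph 2) := by
  rw [← Nat.card_eq_fintype_card] at h
  have hne : Nonempty V := hT.connected.nonempty
  obtain ⟨P, hP, hPcard⟩ :=
    SimpleGraph.exists_isKFairCoalPartition_ncard_eq_kFairCoalNum (h ▸ Nat.card_pos.ne')
  have hsing := hP.2.2.1.singleton_mem_of_ncard_eq hP.1 (hPcard.trans h)
  have hpair := hP.exists_kFairDom_pair (by norm_num) hsing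
  obtain ⟨v⟩ := hne
  obtain ⟨u, huv, hdom⟩ := hpair v
  have hV := hT.isAcyclic.eq_or_eq_of_forall_exists_kFairDom_two hpair huv hdom
  exact hT.connected.nonempty_iso_pathGraph_two
    (Nat.card_eq_two_iff.mpr ⟨v, u, huv.symm, eq_univ_of_forall hV⟩)
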